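/- Let X be a separable real Banach space and let C be a nonempty weak*-compact convex subset of the bidual X** with C ∩ J(X) = ∅. Then there exists a nested sequence (C_n) of nonempty bounded closed convex subsets of X such that C ⊆ ⋂_{n∈ℕ} cl_{w*}(J(C_n)) and, for every x ∈ X, dist(J(x), C) = lim_{n→∞} dist(x, C_n), where the distance on the left is taken in the norm of X** and on the right in the norm of X. -/

import Mathlib

/-!
Banach–Steinhaus puts `C` in a ball of some radius `M`. For a dense sequence `z` in `X` and each
`k, m`, Hahn–Banach in the weak* topology separates the compact convex set `C` from the
weak*-closed ball of radius `dist (J (z k)) C - 1/(m+1)` about `J (z k)` by a half-space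
`{G | G g < u}` with `g ∈ X*`. The set `Cₙ` is the ball of radius `M` in `X` intersected with the
half-spaces `{g ≤ u}` for `k, m ≤ n`. Goldstine's theorem, applied inside the weak*-open set cut
out by the finitely many strict inequalities, puts `C` in the weak* closure of `J(Cₙ)`, and a
second Hahn–Banach argument turns this into `dist (x, Cₙ) ≤ dist (J x, C)`. Conversely, the cuts
force `dist (z k, Cₙ) ≥ dist (J (z k), C) - 1/(m+1)` once `n ≥ k, m`; since the functions
`dist (·, Cₙ)` are 1-Lipschitz, convergence along the dense sequence gives convergence everywhere.
-/

open NormedSpace Filter Topology Metric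

/-- The weak*-closure of a subset of the bidual `X** = Dual ℝ (Dual ℝ X)`. -/
noncomputable def wClosure {X : Type*} [NormedAddCommGroup X] [NormedSpace ℝ X]
    (S : Set (StrongDual ℝ (StrongDual ℝ X))) :
    Set (StrongDual ℝ (StrongDual ℝ X)) :=
  ⇑StrongDual.toWeakDual ⁻¹' closure (⇑StrongDual.toWeakDual '' S)

section Functionals

variable {E : Type*} [NormedAddCommGroup E] [NormedSpace ℝ E]

-- `WeakDual` is a `def`, so the instance for `WeakBilin` is not found through it.
instance : LocallyConvexSpace ℝ (WeakDual ℝ E) := WeakBilin.locallyConvexSpace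

theorem WeakDual.exists_eval_eq (φ : StrongDual ℝ (WeakDual ℝ E)) :
    ∃ g : E, ∀ G : WeakDual ℝ E, φ G = G g := by
  obtain ⟨g, rfl⟩ := LinearMap.dualEmbedding_surjective (topDualPairing ℝ E) φ
  exact ⟨g, fun _ => rfl⟩

theorem mul_norm_le_of_forall_closedBall_apply_le {f : StrongDual ℝ E} {r c : ℝ} (hr : 0 ≤ r)
    (hf : ∀ z ∈ closedBall (0 : E) r, f z ≤ c) : r * ‖f‖ ≤ c := by
  have hc : 0 ≤ c := by simpa using hf 0 (mem_closedBall_self hr)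
  rcases hr.eq_or_lt with rfl | hr
  · simpa using hc
  rw [← le_div_iff₀' hr]
  refine ContinuousLinearMap.opNorm_le_of_unit_norm (div_nonneg hc hr.le) fun z hz => ?_
  have hmem : ∀ s : ℝ, |s| = 1 → (s * r) • z ∈ closedBall (0 : E) r := fun s hs => by
    simp [norm_smul, hz, hs, abs_of_pos hr]
  have h₁ := hf _ (hmem 1 (by simp))
  have h₂ := hf _ (hmem (-1) (by simp))
  simp only [map_smul, smul_eq_mul] at h₁ h₂
  rw [Real.norm_eq_abs, abs_le, neg_le, le_div_iff₀ hr, le_div_iff₀ hr]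
  constructor <;> linarith

theorem StrongDual.isBounded_of_isCompact_toWeakDual_image [CompleteSpace E]
    {C : Set (StrongDual ℝ E)}
    (hC : IsCompact (⇑StrongDual.toWeakDual '' C)) : Bornology.IsBounded C :=
  WeakDual.isBounded_iff_isVonNBounded.2 (hC.isVonNBounded ℝ) |>.subset
    (Set.subset_preimage_image _ _)

theorem exists_separation_of_lt_infDist {C : Set (StrongDual ℝ E)} (hconv : Convex ℝ C)
    (hcomp : IsCompact (⇑StrongDual.toWeakDual '' C)) {P : StrongDual ℝ E} {r : ℝ}
    (hr : r < infDist P C) :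
    ∃ (g : E) (u : ℝ), (∀ F ∈ C, F g < u) ∧ ∀ G : StrongDual ℝ E, G g ≤ u → r < dist G P := by
  set T : Set (WeakDual ℝ E) := WeakDual.toStrongDual ⁻¹' closedBall P r
  have hTconv : Convex ℝ T := (convex_closedBall P r).linear_preimage
    (WeakDual.toStrongDual : WeakDual ℝ E ≃ₗ[ℝ] StrongDual ℝ E).toLinearMap
  have hdisj : Disjoint (⇑StrongDual.toWeakDual '' C) T := by
    rw [Set.disjoint_left]
    rintro _ ⟨F, hF, rfl⟩ (hFT : dist F P ≤ r)
    have := infDist_le_dist_of_mem (x := P) hF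
    rw [dist_comm] at this
    linarith
  obtain ⟨φ, u, v, hCu, huv, hvT⟩ := geometric_hahn_banach_compact_closed
    (hconv.linear_image (StrongDual.toWeakDual : StrongDual ℝ E ≃ₗ[ℝ] WeakDual ℝ E).toLinearMap)
    hcomp hTconv (WeakDual.isClosed_closedBall P r) hdisj
  obtain ⟨g, hg⟩ := WeakDual.exists_eval_eq φ
  refine ⟨g, u, fun F hF => hg _ ▸ hCu _ ⟨F, hF, rfl⟩, fun G hG => ?_⟩
  by_contra! hGP
  have := hg _ ▸ hvT (StrongDual.toWeakDual G) hGP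
  exact absurd (huv.trans this) (not_lt.2 hG)

end Functionals

section Bidual

variable {X : Type*} [NormedAddCommGroup X] [NormedSpace ℝ X]

local notation "J" => inclusionInDoubleDual ℝ X

theorem dist_inclusionInDoubleDual (x y : X) : dist (J x) (J y) = dist x y :=
  (inclusionInDoubleDualLi ℝ).dist_map x y

theorem mem_wClosure_image_closedBall {R : ℝ} (hR : 0 ≤ R) {F : StrongDual ℝ (StrongDual ℝ X)}
    (hF : ‖F‖ ≤ R) : F ∈ wClosure (J '' closedBall (0 : X) R) := by
  by_contra hmem
  have hconv : Convex ℝ (closure (⇑StrongDual.toWeakDual '' (J '' closedBall (0 : X) R))) := by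
    refine Convex.closure ?_
    rw [Set.image_image]
    exact (convex_closedBall (0 : X) R).linear_image
      ((StrongDual.toWeakDual : StrongDual ℝ (StrongDual ℝ X) ≃ₗ[ℝ] _).toLinearMap ∘ₗ
        (J).toLinearMap)
  obtain ⟨φ, u, hSu, huF⟩ := geometric_hahn_banach_closed_point hconv isClosed_closure hmem
  obtain ⟨g, hg⟩ := WeakDual.exists_eval_eq φ
  have hball : ∀ y ∈ closedBall (0 : X) R, g y ≤ u := fun y hy =>
    (hg _ ▸ hSu _ (subset_closure ⟨J y, ⟨y, hy, rfl⟩, rfl⟩)).le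
  have : F g ≤ u := calc
    F g ≤ ‖F‖ * ‖g‖ := (le_abs_self _).trans (F.le_opNorm g)
    _ ≤ R * ‖g‖ := by gcongr
    _ ≤ u := mul_norm_le_of_forall_closedBall_apply_le hR hball
  exact absurd (hg _ ▸ huF) (not_lt.2 this)

theorem nonempty_of_mem_wClosure {S : Set (StrongDual ℝ (StrongDual ℝ X))}
    {F : StrongDual ℝ (StrongDual ℝ X)} (hF : F ∈ wClosure S) : S.Nonempty := by
  contrapose! hF
  simp [wClosure, hF]

theorem infDist_le_dist_of_mem_wClosure {D : Set X} (hD : Convex ℝ D) (x : X)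
    {F : StrongDual ℝ (StrongDual ℝ X)} (hF : F ∈ wClosure (J '' D)) :
    infDist x D ≤ dist (J x) F := by
  refine le_of_forall_lt_imp_le_of_dense fun r hr => ?_
  rcases le_or_gt r 0 with hr0 | hr0
  · exact hr0.trans dist_nonneg
  have hdisj : Disjoint (ball x (infDist x D)) D :=
    Set.disjoint_left.2 fun y hy hyD => (infDist_le_dist_of_mem hyD).not_gt (mem_ball'.1 hy)
  obtain ⟨f, u, hball, hD⟩ := geometric_hahn_banach_open (convex_ball _ _) isOpen_ball hD hdisj
  have hFf : u ≤ F f := by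
    refine closure_minimal ?_ (isClosed_le continuous_const (WeakDual.eval_continuous f)) hF
    rintro _ ⟨_, ⟨y, hy, rfl⟩, rfl⟩
    exact hD y hy
  have hrf : r * ‖f‖ ≤ u - f x := by
    refine mul_norm_le_of_forall_closedBall_apply_le hr0.le fun z hz => ?_
    have := hball (x + z) (by simpa [mem_closedBall, mem_ball] using hz.trans_lt hr)
    rw [map_add] at this
    linarith
  have hux : 0 < u - f x := sub_pos.2 (hball x (mem_ball_self (hr0.trans hr)))
  have hFx : u - f x ≤ dist (J x) F * ‖f‖ := calc
    u - f x ≤ (F - J x) f := by simpa using hFf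
    _ ≤ ‖F - J x‖ * ‖f‖ := (le_abs_self _).trans ((F - J x).le_opNorm f)
    _ = dist (J x) F * ‖f‖ := by
      rw [dist_comm, dist_eq_norm (F : StrongDual ℝ (StrongDual ℝ X))]
  have hf : 0 < ‖f‖ := by
    by_contra! h
    nlinarith [norm_nonneg f, dist_nonneg (x := J x) (y := F)]
  exact le_of_mul_le_mul_right (hrf.trans hFx) hf

end Bidual

theorem tendsto_of_le_of_forall_eventually_sub_one_div_le {ι : Type*} {l : Filter ι}
    {a : ι → ℝ} {L : ℝ} (hle : ∀ i, a i ≤ L) (hlow : ∀ m : ℕ, ∀ᶠ i in l, L - 1 / (m + 1) ≤ a i) :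
    Tendsto a l (𝓝 L) := by
  refine tendsto_order.2 ⟨fun b hb => ?_, fun b hb => .of_forall fun i => (hle i).trans_lt hb⟩
  obtain ⟨m, hm⟩ := exists_nat_one_div_lt (sub_pos.2 hb)
  filter_upwards [hlow m] with i hi
  linarith

theorem tendsto_infDist_of_dense {X ι : Type*} [PseudoMetricSpace X] {l : Filter ι}
    {D : ι → Set X} {ψ : X → ℝ} (hψ : Continuous ψ) {S : Set X} (hS : Dense S)
    (h : ∀ y ∈ S, Tendsto (fun n => infDist y (D n)) l (𝓝 (ψ y))) (x : X) :
    Tendsto (fun n => infDist x (D n)) l (𝓝 (ψ x)) :=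
  have hequi := (LipschitzWith.uniformEquicontinuous (fun n x => infDist x (D n)) 1
    fun n => lipschitz_infDist_pt (D n)).equicontinuous
  (hequi.isClosed_setOfPred_tendsto hψ).closure_subset_iff.2 h (hS x)

section HalfSpaces

variable {X ι : Type*} [NormedAddCommGroup X] [NormedSpace ℝ X]
  (M : ℝ) (g : ι → StrongDual ℝ X) (u : ι → ℝ)

def ballInterHalfSpaces (s : Set ι) : Set X :=
  closedBall 0 M ∩ ⋂ i ∈ s, {y | g i y ≤ u i}

theorem convex_ballInterHalfSpaces (s : Set ι) : Convex ℝ (ballInterHalfSpaces M g u s) :=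
  (convex_closedBall _ _).inter
    (convex_iInter₂ fun i _ => convex_halfSpace_le (g i).toLinearMap.isLinear _)

theorem isClosed_ballInterHalfSpaces (s : Set ι) : IsClosed (ballInterHalfSpaces M g u s) :=
  isClosed_closedBall.inter
    (isClosed_biInter fun i _ => isClosed_le (g i).continuous continuous_const)

theorem isBounded_ballInterHalfSpaces (s : Set ι) :
    Bornology.IsBounded (ballInterHalfSpaces M g u s) :=
  isBounded_closedBall.subset Set.inter_subset_left

theorem ballInterHalfSpaces_anti {s t : Set ι} (hst : s ⊆ t) :
    ballInterHalfSpaces M g u t ⊆ ballInterHalfSpaces M g u s :=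
  Set.inter_subset_inter_right _ (Set.biInter_subset_biInter_left hst)

theorem mem_wClosure_ballInterHalfSpaces {s : Set ι} (hs : s.Finite) (hM : 0 ≤ M)
    {F : StrongDual ℝ (StrongDual ℝ X)} (hFM : ‖F‖ ≤ M) (hFs : ∀ i ∈ s, F (g i) < u i) :
    F ∈ wClosure (inclusionInDoubleDual ℝ X '' ballInterHalfSpaces M g u s) := by
  let W : Set (WeakDual ℝ (StrongDual ℝ X)) := ⋂ i ∈ s, {G | G (g i) < u i}
  have hW : IsOpen W :=
    hs.isOpen_biInter fun i _ => isOpen_lt (WeakDual.eval_continuous _) continuous_const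
  have hFW : StrongDual.toWeakDual F ∈ W := Set.mem_iInter₂.2 hFs
  show StrongDual.toWeakDual F ∈ closure _
  refine _root_.mem_closure_iff.2 fun V hV hFV => ?_
  have hF : StrongDual.toWeakDual F ∈
      closure (⇑StrongDual.toWeakDual '' (inclusionInDoubleDual ℝ X '' closedBall 0 M)) :=
    mem_wClosure_image_closedBall hM hFM
  obtain ⟨_, ⟨hyV, hyW⟩, _, ⟨y, hy, rfl⟩, rfl⟩ :=
    _root_.mem_closure_iff.1 hF (V ∩ W) (hV.inter hW) ⟨hFV, hFW⟩
  have hyD : y ∈ ballInterHalfSpaces M g u s :=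
    ⟨hy, Set.mem_iInter₂.2 fun i hi => show g i y ≤ u i from (Set.mem_iInter₂.1 hyW i hi).le⟩
  exact ⟨_, hyV, _, ⟨y, hyD, rfl⟩, rfl⟩

theorem le_infDist_ballInterHalfSpaces {s : Set ι} {i : ι} (hi : i ∈ s)
    (hne : (ballInterHalfSpaces M g u s).Nonempty) {x : X} {r : ℝ}
    (hsep : ∀ G : StrongDual ℝ (StrongDual ℝ X), G (g i) ≤ u i →
      r < dist G (inclusionInDoubleDual ℝ X x)) :
    r ≤ infDist x (ballInterHalfSpaces M g u s) := by
  refine (le_infDist hne).2 fun y hy => ?_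
  have := hsep (inclusionInDoubleDual ℝ X y) (Set.mem_iInter₂.1 hy.2 i hi)
  rw [dist_inclusionInDoubleDual, dist_comm] at this
  exact this.le

end HalfSpaces

theorem bidual_distance_type_is_empty_distance_type_general
    {X : Type*} [NormedAddCommGroup X] [NormedSpace ℝ X]
    [TopologicalSpace.SeparableSpace X]
    (C : Set (StrongDual ℝ (StrongDual ℝ X)))
    (hne : C.Nonempty) (hconv : Convex ℝ C)
    (hcomp : IsCompact (⇑StrongDual.toWeakDual '' C)) :
    ∃ D : ℕ → Set X,
      (∀ n, (D n).Nonempty) ∧ (∀ n, Bornology.IsBounded (D n)) ∧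
      (∀ n, IsClosed (D n)) ∧ (∀ n, Convex ℝ (D n)) ∧ (∀ n, D (n + 1) ⊆ D n) ∧
      C ⊆ (⋂ n, wClosure (⇑(inclusionInDoubleDual ℝ X) '' D n)) ∧
      ∀ x : X, Tendsto (fun n => infDist x (D n)) atTop
        (𝓝 (infDist (inclusionInDoubleDual ℝ X x) C)) := by
  set J := inclusionInDoubleDual ℝ X
  obtain ⟨M, hM, hCM⟩ :=
    (StrongDual.isBounded_of_isCompact_toWeakDual_image hcomp).exists_pos_norm_le
  let z := TopologicalSpace.denseSeq X
  choose g u hCu hsep using fun p : ℕ × ℕ => exists_separation_of_lt_infDist hconv hcomp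
    (P := J (z p.1)) (r := infDist (J (z p.1)) C - 1 / (p.2 + 1))
    (sub_lt_self _ Nat.one_div_pos_of_nat)
  let D n := ballInterHalfSpaces M g u (Set.Iic n ×ˢ Set.Iic n)
  have hCD : ∀ n, C ⊆ wClosure (J '' D n) := fun n F hF =>
    mem_wClosure_ballInterHalfSpaces M g u ((Set.finite_Iic n).prod (Set.finite_Iic n)) hM.le
      (hCM F hF) fun p _ => hCu p F hF
  have hDne : ∀ n, (D n).Nonempty := fun n =>
    (nonempty_of_mem_wClosure (hCD n hne.some_mem)).of_image
  have hle : ∀ n x, infDist x (D n) ≤ infDist (J x) C := fun n x => (le_infDist hne).2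
    fun F hF => infDist_le_dist_of_mem_wClosure (convex_ballInterHalfSpaces M g u _) x (hCD n hF)
  refine ⟨D, hDne, fun n => isBounded_ballInterHalfSpaces M g u _,
    fun n => isClosed_ballInterHalfSpaces M g u _, fun n => convex_ballInterHalfSpaces M g u _,
    fun n => ballInterHalfSpaces_anti M g u (Set.prod_mono (Set.Iic_subset_Iic.2 n.le_succ)
      (Set.Iic_subset_Iic.2 n.le_succ)), fun F hF => Set.mem_iInter.2 fun n => hCD n hF,
    tendsto_infDist_of_dense ((continuous_infDist_pt C).comp J.continuous)
      (TopologicalSpace.denseRange_denseSeq X) ?_⟩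
  rintro _ ⟨k, rfl⟩
  refine tendsto_of_le_of_forall_eventually_sub_one_div_le (fun n => hle n _) fun m => ?_
  filter_upwards [eventually_ge_atTop (max k m)] with n hn
  exact le_infDist_ballInterHalfSpaces M g u (s := Set.Iic n ×ˢ Set.Iic n) (i := (k, m))
    ⟨le_of_max_le_left hn, le_of_max_le_right hn⟩ (hDne n) (hsep _)

/-- For a nonempty weak*-compact convex set `C ⊆ X**` of a separable Banach space `X` with
`C ∩ J(X) = ∅`, there is a nested sequence `(Cₙ)` of nonempty bounded closed convex subsets of
`X` with `C ⊆ ⋂ₙ cl_{w*}(J(Cₙ))` such that `dist(J x, C) = limₙ dist(x, Cₙ)` for all `x ∈ X`. -/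
theorem bidual_distance_type_is_empty_distance_type
    {X : Type*} [NormedAddCommGroup X] [NormedSpace ℝ X] [CompleteSpace X]
    [TopologicalSpace.SeparableSpace X]
    (C : Set (StrongDual ℝ (StrongDual ℝ X)))
    (hne : C.Nonempty) (hconv : Convex ℝ C)
    (hcomp : IsCompact (⇑StrongDual.toWeakDual '' C))
    (hdisj : C ∩ Set.range (⇑(inclusionInDoubleDual ℝ X)) = ∅) :
    ∃ D : ℕ → Set X,
      (∀ n, (D n).Nonempty) ∧ (∀ n, Bornology.IsBounded (D n)) ∧
      (∀ n, IsClosed (D n)) ∧ (∀ n, Convex ℝ (D n)) ∧ (∀ n, D (n + 1) ⊆ D n) ∧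
      C ⊆ (⋂ n, wClosure (⇑(inclusionInDoubleDual ℝ X) '' D n)) ∧
      ∀ x : X, Tendsto (fun n => infDist x (D n)) atTop
        (𝓝 (infDist (inclusionInDoubleDual ℝ X x) C)) :=
  bidual_distance_type_is_empty_distance_type_general C hne hconv hcomp
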